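/- Reading off the (2,2) block of the identity M^T M = T^T T for the square-root covariance update: with P = (P^r)^T P^r, R = (R^r)^T R^r > 0, Q = (Q^r)^T Q^r, and S = u^T P u + R, the propagated factor satisfies (P₊^r)^T P₊^r = P − (P u)(P u)^T/S + Q, i.e., the square-root update reproduces the Joseph-form covariance propagation ψ(u, K, P) with Kalman gain K = P u / S. -/

import Mathlib

/-!
An orthogonal factor is invisible in a Gram matrix: from `M = Q T` with `QᵀQ = 1` we get
`MᵀM = TᵀT`, and both sides are block matrices in the blocks of the pre- and post-arrays.
The (1,1) block gives `S_r² = uᵀPu + R = S`, and the (2,2) block gives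
`P_rᵀP_r + Q_rᵀQ_r = (Pu)(Pu)ᵀ / S_r² + P₊ᵀP₊`, which is the first formula. The Joseph form is then a
rearrangement valid for every symmetric `P`: expanding `(1 - K uᵀ) P (1 - K uᵀ)ᵀ + R K Kᵀ`
with `K = Pu / S` leaves `P - (2/S - (uᵀPu + R)/S²) (Pu)(Pu)ᵀ = P - (Pu)(Pu)ᵀ / S`.
-/

open Matrix

theorem transpose_mul_self_eq_of_eq_mul {m n k R : Type*} [Fintype m] [Fintype n]
    [DecidableEq n] [CommSemiring R] {Q : Matrix m n R} {M : Matrix m k R} {T : Matrix n k R}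
    (hQ : Qᵀ * Q = 1) (h : M = Q * T) : Mᵀ * M = Tᵀ * T := by
  rw [h, transpose_mul, Matrix.mul_assoc, ← Matrix.mul_assoc Qᵀ, hQ, Matrix.one_mul]

section BlockGram

variable {m₁ m₂ n₁ n₂ R : Type*} [Fintype m₁] [Fintype m₂] [Semiring R]

theorem transpose_mul_self_fromRows {n : Type*} (A₁ : Matrix m₁ n R) (A₂ : Matrix m₂ n R) :
    (fromRows A₁ A₂)ᵀ * fromRows A₁ A₂ = A₁ᵀ * A₁ + A₂ᵀ * A₂ := by
  rw [transpose_fromRows, fromCols_mul_fromRows]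

theorem transpose_mul_self_fromBlocks (A : Matrix m₁ n₁ R) (B : Matrix m₁ n₂ R)
    (C : Matrix m₂ n₁ R) (D : Matrix m₂ n₂ R) :
    (fromBlocks A B C D)ᵀ * fromBlocks A B C D =
      fromBlocks (Aᵀ * A + Cᵀ * C) (Aᵀ * B + Cᵀ * D) (Bᵀ * A + Dᵀ * C) (Bᵀ * B + Dᵀ * D) := by
  rw [fromBlocks_transpose, fromBlocks_multiply]

end BlockGram

section Field

variable {ι 𝕜 : Type*} [Field 𝕜]

theorem transpose_mul_self_of_div {κ : Type*} [Fintype κ] [Unique κ] (v : ι → 𝕜) (c : 𝕜) :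
    (of fun (_ : κ) j => v j / c)ᵀ * of (fun (_ : κ) j => v j / c) =
      (c * c)⁻¹ • vecMulVec v v := by
  ext i j
  simp only [mul_apply, transpose_apply, of_apply, Finset.univ_unique, Finset.sum_singleton,
    Matrix.smul_apply, vecMulVec_apply, smul_eq_mul]
  ring

theorem joseph_form_eq [Fintype ι] [DecidableEq ι] {P : Matrix ι ι 𝕜} (hP : P.IsSymm)
    (u : ι → 𝕜) {R S : 𝕜} {K : ι → 𝕜} (hS : S = u ⬝ᵥ P *ᵥ u + R) (hK : K = S⁻¹ • (P *ᵥ u)) :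
    (1 - vecMulVec K u) * P * (1 - vecMulVec K u)ᵀ + R • vecMulVec K K =
      P - S⁻¹ • vecMulVec (P *ᵥ u) (P *ᵥ u) := by
  have huP : u ᵥ* P = P *ᵥ u := by rw [← hP.eq, vecMul_transpose, hP.eq]
  -- true also for `S = 0`, since `0⁻¹ = 0`
  have hcoef : (u ⬝ᵥ P *ᵥ u + R) / (S * S) = S⁻¹ := by rw [← hS, div_self_mul_self']
  subst hK
  simp only [transpose_sub, transpose_one, transpose_vecMulVec, sub_mul, mul_sub, one_mul,
    mul_one, vecMulVec_mul, mul_vecMulVec, huP, smul_vecMulVec, vecMulVec_smul,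
    Matrix.smul_mul, Matrix.mul_smul, transpose_smul, smul_mulVec, vecMulVec_mulVec,
    op_smul_eq_smul, smul_smul, dotProduct_comm (P *ᵥ u) u]
  linear_combination (norm := module) hcoef • vecMulVec (P *ᵥ u) (P *ᵥ u)

end Field

theorem sqrt_kalman_update_reproduces_joseph_general {n : ℕ}
    (Pr Qr : Matrix (Fin n) (Fin n) ℝ) (Rr : ℝ) (u : Fin n → ℝ)
    (P Q : Matrix (Fin n) (Fin n) ℝ) (R S : ℝ) (K : Fin n → ℝ)
    (hP : P = Prᵀ * Pr) (hQ : Q = Qrᵀ * Qr) (hR : R = Rr ^ 2)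
    (hS : S = u ⬝ᵥ P *ᵥ u + R) (hK : K = S⁻¹ • (P *ᵥ u))
    (Sr : ℝ) (Pp : Matrix (Fin n) (Fin n) ℝ)
    (QF : Matrix ((Fin 1 ⊕ Fin n) ⊕ Fin n) ((Fin 1 ⊕ Fin n) ⊕ Fin n) ℝ)
    (M T : Matrix ((Fin 1 ⊕ Fin n) ⊕ Fin n) (Fin 1 ⊕ Fin n) ℝ)
    (hM : M = fromRows
      (fromBlocks (Matrix.of fun (_ : Fin 1) (_ : Fin 1) => Rr) 0
        (Matrix.of fun i (_ : Fin 1) => (Pr *ᵥ u) i) Pr)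
      (fromCols (0 : Matrix (Fin n) (Fin 1) ℝ) Qr))
    (hT : T = fromRows
      (fromBlocks (Matrix.of fun (_ : Fin 1) (_ : Fin 1) => Sr)
        (Matrix.of fun (_ : Fin 1) j => (P *ᵥ u) j / Sr) 0 Pp) 0)
    (hQF : QFᵀ * QF = 1) (hfact : M = QF * T) :
    Ppᵀ * Pp = P - S⁻¹ • vecMulVec (P *ᵥ u) (P *ᵥ u) + Q ∧
    Ppᵀ * Pp = (1 - vecMulVec K u) * P * (1 - vecMulVec K u)ᵀ + R • vecMulVec K K + Q := by
  have hgram := transpose_mul_self_eq_of_eq_mul hQF hfact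
  rw [hM, hT, transpose_mul_self_fromRows, transpose_mul_self_fromRows,
    transpose_mul_self_fromBlocks, transpose_mul_self_fromBlocks, transpose_fromCols,
    fromRows_mul_fromCols, fromBlocks_add] at hgram
  simp only [transpose_zero, Matrix.zero_mul, Matrix.mul_zero, add_zero, zero_add] at hgram
  obtain ⟨h11, -, -, h22⟩ := fromBlocks_inj.mp hgram
  have hSr : Sr * Sr = S := by
    have h := congrFun₂ h11 0 0
    simp only [Matrix.add_apply, mul_apply, transpose_apply, of_apply, Finset.univ_unique,
      Finset.sum_singleton] at h
    rw [hS, hR, hP, ← mulVec_mulVec, dotProduct_mulVec, vecMul_transpose, ← h]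
    simp only [dotProduct]
    ring
  have hPp : Ppᵀ * Pp = P - S⁻¹ • vecMulVec (P *ᵥ u) (P *ᵥ u) + Q := by
    rw [transpose_mul_self_of_div, hSr, ← hP, ← hQ] at h22
    rw [sub_add_eq_add_sub]
    exact eq_sub_of_add_eq' h22.symm
  have hPsymm : P.IsSymm := hP ▸ isSymm_transpose_mul_self Pr
  exact ⟨hPp, by rw [hPp, joseph_form_eq hPsymm u hS hK]⟩

/-- Reading off the (2,2) block of `MᵀM = TᵀT` for the square-root covariance update:
with `P = (Pʳ)ᵀPʳ`, `R = (Rʳ)² > 0`, `Q = (Qʳ)ᵀQʳ` and `S = uᵀPu + R`, the propagated factor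
satisfies `(P₊ʳ)ᵀP₊ʳ = P − (Pu)(Pu)ᵀ/S + Q`, i.e., the square-root update reproduces the
Joseph-form covariance propagation with Kalman gain `K = Pu/S`. -/
theorem sqrt_kalman_update_reproduces_joseph {n : ℕ}
    (Pr Qr : Matrix (Fin n) (Fin n) ℝ) (Rr : ℝ) (u : Fin n → ℝ)
    (P Q : Matrix (Fin n) (Fin n) ℝ) (R S : ℝ) (K : Fin n → ℝ)
    (hP : P = Prᵀ * Pr) (hQ : Q = Qrᵀ * Qr) (hR : R = Rr ^ 2) (hRpos : 0 < R)
    (hS : S = u ⬝ᵥ P *ᵥ u + R) (hK : K = S⁻¹ • (P *ᵥ u))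
    (Sr : ℝ) (Pp : Matrix (Fin n) (Fin n) ℝ)
    (QF : Matrix ((Fin 1 ⊕ Fin n) ⊕ Fin n) ((Fin 1 ⊕ Fin n) ⊕ Fin n) ℝ)
    (M T : Matrix ((Fin 1 ⊕ Fin n) ⊕ Fin n) (Fin 1 ⊕ Fin n) ℝ)
    (hM : M = fromRows
      (fromBlocks (Matrix.of fun (_ : Fin 1) (_ : Fin 1) => Rr) 0
        (Matrix.of fun i (_ : Fin 1) => (Pr *ᵥ u) i) Pr)
      (fromCols (0 : Matrix (Fin n) (Fin 1) ℝ) Qr))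
    (hT : T = fromRows
      (fromBlocks (Matrix.of fun (_ : Fin 1) (_ : Fin 1) => Sr)
        (Matrix.of fun (_ : Fin 1) j => (P *ᵥ u) j / Sr) 0 Pp) 0)
    (hQF : QFᵀ * QF = 1) (hfact : M = QF * T) :
    Ppᵀ * Pp = P - S⁻¹ • vecMulVec (P *ᵥ u) (P *ᵥ u) + Q ∧
    Ppᵀ * Pp = (1 - vecMulVec K u) * P * (1 - vecMulVec K u)ᵀ + R • vecMulVec K K + Q :=
  sqrt_kalman_update_reproduces_joseph_general Pr Qr Rr u P Q R S K hP hQ hR hS hK Sr Pp QF M T hM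
    hT hQF hfact
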